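/- arXiv:2406.06011 — 2 statements merged into one kernel-verified Lean document; each statement's English description precedes it below -/
import Mathlib

section
/- Let X be a topological space, α an aperiodic homeomorphism of X, F a Banach function space on X satisfying condition Ω_α, and w a measurable positive function on X such that w and w⁻¹ = 1/w are bounded, so that T̃_{α,w}(f) = w·(f∘α) is an invertible bounded linear operator on F. Then the following are equivalent: (i) T̃_{α,w} is topologically Cesàro hyper-transitive on F; (ii) for each compact subset K of X there exist a sequence (E_k) of Borel subsets of K and a strictly increasing sequence (n_k) of natural numbers such that lim_{k→∞} ‖χ_{K∖E_k}‖_F = 0 and lim_{k→∞} ( sup_{x∈E_k} n_k·∏_{j=0}^{n_k−1} (w(α^j(x)))⁻¹ ) = 0 = lim_{k→∞} ( sup_{x∈E_k} n_k⁻¹·∏_{j=1}^{n_k} w(α^{−j}(x)) ). -/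
/-!
(i) ⇒ (ii): choose `N` with `αⁿ K ∩ K = ∅` for `n ≥ N`, and use Cesàro hyper-transitivity to
find `f` with both `f` and `h = n⁻¹ Tⁿ f` within `δ²` of `χ_K`. On the set `E ⊆ K` where
`f ≈ 1`, `f ∘ αⁿ ≈ 0`, `h ≈ 1` and `h ∘ α⁻ⁿ ≈ 0`, the formula
`h = n⁻¹ (∏_{j<n} w ∘ αʲ) · f ∘ αⁿ` bounds both weight expressions by `2δ`, while solidity and
`α`-invariance give a Chebyshev-type bound `‖χ_{K∖E}‖ = O(δ)`.

(ii) ⇒ (i): approximate the centres of the open sets by bounded `f₀, g₀` supported in a compact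
`K`, cut them down to `E_k`, and take `u_k = f₀ χ_{E_k} + n_k S^{n_k} (g₀ χ_{E_k})`. Then
`u_k → f₀` and `n_k⁻¹ T^{n_k} u_k → g₀`: the errors are bounded by `‖χ_{K∖E_k}‖` and by the two
suprema of (ii), times `‖χ_K‖`.
-/

open Filter Finset

/-- A bounded linear operator `T` on a complex normed space is *topologically Cesàro
hyper-transitive* if for every pair of nonempty open subsets `O₁, O₂` there exists a
strictly increasing sequence `(n_k)` of (positive) natural numbers such that
`n_k⁻¹ • T^{n_k}(O₁) ∩ O₂ ≠ ∅` for all `k`. -/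
def IsCesaroHyperTransitive {E : Type*} [NormedAddCommGroup E] [NormedSpace ℂ E]
    (T : E →L[ℂ] E) : Prop :=
  ∀ O₁ O₂ : Set E, IsOpen O₁ → IsOpen O₂ → O₁.Nonempty → O₂.Nonempty →
    ∃ n : ℕ → ℕ, StrictMono n ∧ (∀ k, 1 ≤ n k) ∧
      ∀ k, ∃ f ∈ O₁, ((n k : ℂ))⁻¹ • (T ^ n k) f ∈ O₂

open Topology

theorem isCesaroHyperTransitive_iff_frequently {E : Type*} [NormedAddCommGroup E]
    [NormedSpace ℂ E] (T : E →L[ℂ] E) :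
    IsCesaroHyperTransitive T ↔ ∀ O₁ O₂ : Set E, IsOpen O₁ → IsOpen O₂ → O₁.Nonempty →
      O₂.Nonempty → ∃ᶠ n : ℕ in atTop, ∃ f ∈ O₁, (n : ℂ)⁻¹ • (T ^ n) f ∈ O₂ := by
  refine forall₄_congr fun O₁ O₂ _ _ => forall₂_congr fun _ _ => ⟨?_, fun h => ?_⟩
  · rintro ⟨n, hn, -, h⟩
    exact hn.tendsto_atTop.frequently (Frequently.of_forall h)
  · obtain ⟨n, hn, h⟩ :=
      extraction_forall_of_frequently fun _ => h.and_eventually (eventually_ge_atTop 1)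
    exact ⟨n, hn, fun k => (h k).2, fun k => (h k).1⟩

theorem tendsto_sSup_image_of_le {Y : Type*} {φ : ℕ → Y → ℝ} {E : ℕ → Set Y} {r : ℕ → ℝ}
    (hφ : ∀ k, ∀ y ∈ E k, 0 ≤ φ k y) (hφr : ∀ k, ∀ y ∈ E k, φ k y ≤ r k)
    (hr₀ : ∀ k, 0 ≤ r k) (hr : Tendsto r atTop (𝓝 0)) :
    Tendsto (fun k => sSup (φ k '' E k)) atTop (𝓝 0) :=
  squeeze_zero (fun k => Real.sSup_nonneg <| Set.forall_mem_image.2 (hφ k))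
    (fun k => Real.sSup_le (Set.forall_mem_image.2 (hφr k)) (hr₀ k)) hr

theorem le_sSup_image_mul_prod {Y κ : Type*} {a C : ℝ} (ha : 0 ≤ a) (s : Finset κ)
    {v : κ → Y → ℝ} (hv : ∀ i y, 0 ≤ v i y) (hvC : ∀ i y, v i y ≤ C) {E : Set Y} {y : Y}
    (hy : y ∈ E) : a * ∏ i ∈ s, v i y ≤ sSup ((fun y => a * ∏ i ∈ s, v i y) '' E) := by
  refine le_csSup ⟨a * C ^ s.card, Set.forall_mem_image.2 fun z _ => ?_⟩ ⟨y, hy, rfl⟩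
  rw [← prod_const]
  exact mul_le_mul_of_nonneg_left (prod_le_prod (fun i _ => hv i z) fun i _ => hvC i z) ha

theorem iterate_iterate_symm_of_le {X : Type*} (e : X ≃ X) {j n : ℕ} (h : j ≤ n) (z : X) :
    e^[j] (e.symm^[n] z) = e.symm^[n - j] z := by
  conv_lhs => rw [← Nat.add_sub_cancel' h, Function.iterate_add_apply]
  exact e.rightInverse_symm.iterate j _

theorem prod_range_iterate_iterate_symm {X M : Type*} [CommMonoid M] (e : X ≃ X) (v : X → M)
    (n : ℕ) (z : X) :
    ∏ j ∈ range n, v (e^[j] (e.symm^[n] z)) = ∏ j ∈ Icc 1 n, v (e.symm^[j] z) := by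
  refine prod_nbij' (fun j => n - j) (fun j => n - j) ?_ ?_ ?_ ?_ ?_ <;>
    intro j hj <;> simp only [mem_range, mem_Icc] at hj
  · simp only [mem_Icc]; omega
  · simp only [mem_range]; omega
  · omega
  · omega
  · rw [iterate_iterate_symm_of_le e hj.le]

section BanachFunctionSpace

variable {X 𝓕 : Type*} [NormedAddCommGroup 𝓕] [NormedSpace ℂ 𝓕]

def IsSolid [MeasurableSpace X] (ι : 𝓕 →ₗ[ℂ] (X → ℂ)) : Prop :=
  ∀ (f : 𝓕) (g : X → ℂ), Measurable g → (∀ x, ‖g x‖ ≤ ‖ι f x‖) →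
    ∃ g' : 𝓕, ι g' = g ∧ ‖g'‖ ≤ ‖f‖

def IsCompInvariant (ι : 𝓕 →ₗ[ℂ] (X → ℂ)) (β : X → X) : Prop :=
  ∀ f : 𝓕, ∃ f' : 𝓕, ι f' = ι f ∘ β ∧ ‖f'‖ = ‖f‖

def HasIndicatorNormLE (ι : 𝓕 →ₗ[ℂ] (X → ℂ)) (A : Set X) (r : ℝ) : Prop :=
  ∃ g : 𝓕, ι g = A.indicator 1 ∧ ‖g‖ ≤ r

variable {ι : 𝓕 →ₗ[ℂ] (X → ℂ)}

theorem IsCompInvariant.iterate {β : X → X} (h : IsCompInvariant ι β) (n : ℕ) :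
    IsCompInvariant ι β^[n] := by
  induction n with
  | zero => exact fun f => ⟨f, rfl, rfl⟩
  | succ n ih =>
    intro f
    obtain ⟨f₁, hf₁, hnorm₁⟩ := ih f
    obtain ⟨f₂, hf₂, hnorm₂⟩ := h f₁
    exact ⟨f₂, by rw [hf₂, hf₁, Function.iterate_succ]; rfl, hnorm₂.trans hnorm₁⟩

theorem HasIndicatorNormLE.mono_right {A : Set X} {r s : ℝ} (h : HasIndicatorNormLE ι A r)
    (hrs : r ≤ s) : HasIndicatorNormLE ι A s :=
  let ⟨g, hg, hnorm⟩ := h; ⟨g, hg, hnorm.trans hrs⟩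

variable [MeasurableSpace X]

theorem measurableSet_of_indicator_eq (hmeas : ∀ f, Measurable (ι f)) {A : Set X} {g : 𝓕}
    (hg : ι g = A.indicator 1) : MeasurableSet A :=
  (measurable_indicator_const_iff (1 : ℂ)).1 (hg ▸ hmeas g)

namespace IsSolid

theorem norm_le_mul (hs : IsSolid ι) (hmeas : ∀ f, Measurable (ι f))
    (hinj : Function.Injective ι) {f g : 𝓕} {r : ℝ} (hr : 0 ≤ r)
    (h : ∀ x, ‖ι g x‖ ≤ r * ‖ι f x‖) : ‖g‖ ≤ r * ‖f‖ := by
  obtain ⟨g', hg', hnorm⟩ := hs ((r : ℂ) • f) (ι g) (hmeas g) fun x => by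
    simpa [norm_smul, abs_of_nonneg hr] using h x
  rwa [hinj hg', norm_smul, Complex.norm_of_nonneg hr] at hnorm

theorem hasIndicatorNormLE_setOf_le_norm (hs : IsSolid ι) (hmeas : ∀ f, Measurable (ι f))
    (f : 𝓕) {t : ℝ} (ht : 0 < t) : HasIndicatorNormLE ι {x | t ≤ ‖ι f x‖} (‖f‖ / t) := by
  have hA : MeasurableSet {x | t ≤ ‖ι f x‖} :=
    measurableSet_le measurable_const (hmeas f).norm
  obtain ⟨g, hg, hnorm⟩ := hs ((t⁻¹ : ℂ) • f) _ (measurable_one.indicator hA) fun x => by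
    by_cases hx : t ≤ ‖ι f x‖
    · simp only [Set.indicator_of_mem (show x ∈ {x | t ≤ ‖ι f x‖} from hx), Pi.one_apply,
        norm_one, map_smul, Pi.smul_apply, smul_eq_mul, norm_mul, norm_inv, Complex.norm_real,
        Real.norm_of_nonneg ht.le]
      rwa [le_inv_mul_iff₀ ht, mul_one]
    · simp only [Set.indicator_of_notMem (show x ∉ {x | t ≤ ‖ι f x‖} from hx), norm_zero]
      positivity
  refine ⟨g, hg, hnorm.trans_eq ?_⟩
  rw [norm_smul, norm_inv, Complex.norm_real, Real.norm_of_nonneg ht.le, inv_mul_eq_div]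

theorem hasIndicatorNormLE_union (hs : IsSolid ι) (hmeas : ∀ f, Measurable (ι f))
    {A B : Set X} {r s : ℝ} (hA : HasIndicatorNormLE ι A r) (hB : HasIndicatorNormLE ι B s) :
    HasIndicatorNormLE ι (A ∪ B) (r + s) := by
  obtain ⟨gA, hgA, hnA⟩ := hA
  obtain ⟨gB, hgB, hnB⟩ := hB
  have hAB : MeasurableSet (A ∪ B) :=
    (measurableSet_of_indicator_eq hmeas hgA).union (measurableSet_of_indicator_eq hmeas hgB)
  obtain ⟨g, hg, hnorm⟩ := hs (gA + gB) _ (measurable_one.indicator hAB) fun x => by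
    by_cases hxA : x ∈ A <;> by_cases hxB : x ∈ B <;> norm_num [hgA, hgB, hxA, hxB]
  exact ⟨g, hg, hnorm.trans ((norm_add_le _ _).trans (add_le_add hnA hnB))⟩

theorem hasIndicatorNormLE_of_subset (hs : IsSolid ι) {A B : Set X} {r : ℝ}
    (hA : MeasurableSet A) (hAB : A ⊆ B) (hB : HasIndicatorNormLE ι B r) :
    HasIndicatorNormLE ι A r := by
  obtain ⟨gB, hgB, hnB⟩ := hB
  obtain ⟨g, hg, hnorm⟩ := hs gB _ (measurable_one.indicator hA) fun x => by
    by_cases hxA : x ∈ A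
    · simp [hgB, hxA, hAB hxA]
    · simp [hxA]
  exact ⟨g, hg, hnorm.trans hnB⟩

theorem exists_indicator_eq_norm_sub_le (hs : IsSolid ι) (hmeas : ∀ f, Measurable (ι f))
    (hinj : Function.Injective ι) {K E : Set X} (hE : MeasurableSet E) {f g : 𝓕} {C : ℝ}
    (hC : 0 ≤ C) (hf : ∀ x, ‖ι f x‖ ≤ C) (hfK : ∀ x ∉ K, ι f x = 0)
    (hg : ι g = (K \ E).indicator 1) :
    ∃ a : 𝓕, ι a = E.indicator (ι f) ∧ ‖f - a‖ ≤ C * ‖g‖ := by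
  obtain ⟨a, ha, -⟩ := hs f _ ((hmeas f).indicator hE) fun x => by
    by_cases hx : x ∈ E <;> simp [hx]
  refine ⟨a, ha, hs.norm_le_mul hmeas hinj hC fun x => ?_⟩
  by_cases hxE : x ∈ E
  · simp only [map_sub, Pi.sub_apply, ha, Set.indicator_of_mem hxE, sub_self, norm_zero]
    positivity
  by_cases hxK : x ∈ K
  · simpa [ha, hg, hxE, hxK] using hf x
  · simp only [map_sub, Pi.sub_apply, ha, Set.indicator_of_notMem hxE, hfK x hxK, sub_self,
      norm_zero]
    positivity

end IsSolid

end BanachFunctionSpace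

section WeightedComposition

variable {X 𝓕 : Type*} [NormedAddCommGroup 𝓕] [NormedSpace ℂ 𝓕] {ι : 𝓕 →ₗ[ℂ] (X → ℂ)}
  {w : X → ℝ} {T S : 𝓕 →L[ℂ] 𝓕}

theorem apply_pow_eq_prod_mul {α : X → X} (hT : ∀ f x, ι (T f) x = (w x : ℂ) * ι f (α x))
    (n : ℕ) (f : 𝓕) (x : X) :
    ι ((T ^ n) f) x = ((∏ j ∈ range n, w (α^[j] x) : ℝ) : ℂ) * ι f (α^[n] x) := by
  induction n generalizing f with
  | zero => simp
  | succ n ih =>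
    rw [pow_succ, mul_apply_eq_comp, ih, hT, prod_range_succ, Function.iterate_succ_apply']
    push_cast
    ring

theorem pow_apply_pow_apply_of_rightInverse (hTS : ∀ f, T (S f) = f) (n : ℕ) (g : 𝓕) :
    (T ^ n) ((S ^ n) g) = g := by
  induction n with
  | zero => rfl
  | succ n ih => rw [pow_succ, pow_succ', mul_apply_eq_comp, mul_apply_eq_comp, hTS, ih]

theorem norm_apply_inv_natCast_smul_pow {α : X → X}
    (hT : ∀ f x, ι (T f) x = (w x : ℂ) * ι f (α x)) (hw : ∀ x, 0 < w x) (n : ℕ) (f : 𝓕)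
    (x : X) :
    ‖ι ((n : ℂ)⁻¹ • (T ^ n) f) x‖ =
      (n : ℝ)⁻¹ * (∏ j ∈ range n, w (α^[j] x)) * ‖ι f (α^[n] x)‖ := by
  rw [map_smul, Pi.smul_apply, apply_pow_eq_prod_mul hT, smul_eq_mul, norm_mul, norm_mul,
    norm_inv, Complex.norm_natCast, Complex.norm_of_nonneg (prod_pos fun j _ => hw _).le,
    mul_assoc]

theorem norm_apply_natCast_smul_pow_iterate {α : X → X}
    (hT : ∀ f x, ι (T f) x = (w x : ℂ) * ι f (α x)) (hw : ∀ x, 0 < w x)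
    (hTS : ∀ f, T (S f) = f) (n : ℕ) (g : 𝓕) (y : X) :
    ‖ι ((n : ℂ) • (S ^ n) g) (α^[n] y)‖ = n * (∏ j ∈ range n, (w (α^[j] y))⁻¹) * ‖ι g y‖ := by
  have hP : 0 < ∏ j ∈ range n, w (α^[j] y) := prod_pos fun j _ => hw _
  have hg := apply_pow_eq_prod_mul hT n ((S ^ n) g) y
  rw [pow_apply_pow_apply_of_rightInverse hTS] at hg
  rw [map_smul, Pi.smul_apply, smul_eq_mul, norm_mul, Complex.norm_natCast, hg, norm_mul,
    Complex.norm_of_nonneg hP.le, prod_inv_distrib, mul_assoc, inv_mul_cancel_left₀ hP.ne']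

theorem weight_bounds_of_norm_apply {e : X ≃ X}
    (hT : ∀ f x, ι (T f) x = (w x : ℂ) * ι f (e x)) (hw : ∀ x, 0 < w x) {n : ℕ} {δ : ℝ}
    {f : 𝓕} {x : X} (hfx : 2⁻¹ < ‖ι f x‖) (hfnx : ‖ι f (e^[n] x)‖ < δ)
    (hTfx : 2⁻¹ < ‖ι ((n : ℂ)⁻¹ • (T ^ n) f) x‖)
    (hTf_x : ‖ι ((n : ℂ)⁻¹ • (T ^ n) f) (e.symm^[n] x)‖ < δ) :
    n * ∏ j ∈ range n, (w (e^[j] x))⁻¹ ≤ 2 * δ ∧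
      (n : ℝ)⁻¹ * ∏ j ∈ Icc 1 n, w (e.symm^[j] x) ≤ 2 * δ := by
  rw [norm_apply_inv_natCast_smul_pow hT hw] at hTfx hTf_x
  rw [prod_range_iterate_iterate_symm, e.rightInverse_symm.iterate n x] at hTf_x
  have hP : 0 ≤ (n : ℝ)⁻¹ * ∏ j ∈ range n, w (e^[j] x) :=
    mul_nonneg (by positivity) (prod_pos fun j _ => hw _).le
  have hQ : 0 ≤ (n : ℝ)⁻¹ * ∏ j ∈ Icc 1 n, w (e.symm^[j] x) :=
    mul_nonneg (by positivity) (prod_pos fun j _ => hw _).le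
  constructor
  · have hPδ : 2⁻¹ < (n : ℝ)⁻¹ * (∏ j ∈ range n, w (e^[j] x)) * δ :=
      hTfx.trans_le (mul_le_mul_of_nonneg_left hfnx.le hP)
    have hP₀ : 0 < (n : ℝ)⁻¹ * ∏ j ∈ range n, w (e^[j] x) :=
      hP.lt_of_ne (by rintro h; rw [← h, zero_mul] at hPδ; norm_num at hPδ)
    rw [prod_inv_distrib, ← inv_inv (n : ℝ), ← mul_inv, inv_le_iff_one_le_mul₀ hP₀]
    linarith
  · nlinarith [mul_le_mul_of_nonneg_left hfx.le hQ]

end WeightedComposition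

section WeightedCompositionOnSolidSpace

variable {X 𝓕 : Type*} [MeasurableSpace X] [NormedAddCommGroup 𝓕] [NormedSpace ℂ 𝓕]
  {ι : 𝓕 →ₗ[ℂ] (X → ℂ)} {w : X → ℝ} {T S : 𝓕 →L[ℂ] 𝓕} {e : X ≃ X} {K E : Set X} {c : 𝓕}

/-- Condition (ii) for the compact set `K`. -/
def WeightCondition (ι : 𝓕 →ₗ[ℂ] (X → ℂ)) (e : X ≃ X) (w : X → ℝ) (K : Set X) : Prop :=
  ∃ (E : ℕ → Set X) (n : ℕ → ℕ),
    (∀ k, MeasurableSet (E k)) ∧ (∀ k, E k ⊆ K) ∧ StrictMono n ∧ (∀ k, 1 ≤ n k) ∧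
    (∃ g : ℕ → 𝓕, (∀ k, ι (g k) = Set.indicator (K \ E k) 1) ∧
      Tendsto (fun k => ‖g k‖) atTop (𝓝 0)) ∧
    Tendsto (fun k => sSup ((fun x => (n k : ℝ) *
      ∏ j ∈ range (n k), (w (e^[j] x))⁻¹) '' E k)) atTop (𝓝 0) ∧
    Tendsto (fun k => sSup ((fun x => ((n k : ℝ))⁻¹ *
      ∏ j ∈ Icc 1 (n k), w (e.symm^[j] x)) '' E k)) atTop (𝓝 0)

theorem exists_subset_weight_bounds (hs : IsSolid ι) (hmeas : ∀ f, Measurable (ι f))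
    (he : IsCompInvariant ι e) (he' : IsCompInvariant ι e.symm)
    (hT : ∀ f x, ι (T f) x = (w x : ℂ) * ι f (e x)) (hw : ∀ x, 0 < w x)
    (hc : ι c = K.indicator 1) {n : ℕ} (hK : ∀ x ∈ K, e^[n] x ∉ K) {δ : ℝ} (hδ : 0 < δ)
    {f : 𝓕} (hf : ‖f - c‖ < δ ^ 2) (hTf : ‖(n : ℂ)⁻¹ • (T ^ n) f - c‖ < δ ^ 2) :
    ∃ E ⊆ K, MeasurableSet E ∧ HasIndicatorNormLE ι (K \ E) (4 * δ ^ 2 + 2 * δ) ∧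
      ∀ x ∈ E, n * ∏ j ∈ range n, (w (e^[j] x))⁻¹ ≤ 2 * δ ∧
        (n : ℝ)⁻¹ * ∏ j ∈ Icc 1 n, w (e.symm^[j] x) ≤ 2 * δ := by
  set h := (n : ℂ)⁻¹ • (T ^ n) f
  obtain ⟨u, hu, hnu⟩ := he.iterate n (f - c)
  obtain ⟨v, hv, hnv⟩ := he'.iterate n (h - c)
  have hlt (u : 𝓕) (t : ℝ) : MeasurableSet {x | ‖ι u x‖ < t} :=
    measurableSet_lt (hmeas u).norm measurable_const
  have hKm : MeasurableSet K := measurableSet_of_indicator_eq hmeas hc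
  set E := K ∩ {x | ‖ι (f - c) x‖ < 2⁻¹} ∩ {x | ‖ι u x‖ < δ} ∩ {x | ‖ι (h - c) x‖ < 2⁻¹} ∩
    {x | ‖ι v x‖ < δ}
  have hEm : MeasurableSet E :=
    (((hKm.inter (hlt _ _)).inter (hlt _ _)).inter (hlt _ _)).inter (hlt _ _)
  refine ⟨E, fun x hx => hx.1.1.1.1, hEm, ?_, ?_⟩
  · have h₁ := hs.hasIndicatorNormLE_setOf_le_norm hmeas (f - c) (inv_pos.2 two_pos)
    have h₂ := hs.hasIndicatorNormLE_setOf_le_norm hmeas u hδ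
    have h₃ := hs.hasIndicatorNormLE_setOf_le_norm hmeas (h - c) (inv_pos.2 two_pos)
    have h₄ := hs.hasIndicatorNormLE_setOf_le_norm hmeas v hδ
    refine hs.hasIndicatorNormLE_of_subset (hKm.diff hEm) ?_
      ((hs.hasIndicatorNormLE_union hmeas (hs.hasIndicatorNormLE_union hmeas
        (hs.hasIndicatorNormLE_union hmeas h₁ h₂) h₃) h₄).mono_right ?_)
    · rintro x ⟨hxK, hxE⟩
      simp only [Set.mem_union, Set.mem_ofPred_eq]
      by_contra! hx
      exact hxE ⟨⟨⟨⟨hxK, hx.1.1.1⟩, hx.1.1.2⟩, hx.1.2⟩, hx.2⟩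
    · have hfδ : ‖f - c‖ / δ ≤ δ := by rw [div_le_iff₀ hδ, ← sq]; exact hf.le
      have hTfδ : ‖h - c‖ / δ ≤ δ := by rw [div_le_iff₀ hδ, ← sq]; exact hTf.le
      rw [hnu, hnv, div_inv_eq_mul, div_inv_eq_mul]
      linarith
  · rintro x ⟨⟨⟨⟨hxK, h₁⟩, h₂⟩, h₃⟩, h₄⟩
    have half_lt (z : ℂ) (hz : ‖z - 1‖ < 2⁻¹) : 2⁻¹ < ‖z‖ := by
      have := norm_sub_norm_le (1 : ℂ) z
      rw [norm_sub_rev, norm_one] at this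
      linarith
    have hK' : e.symm^[n] x ∉ K := fun hx' =>
      hK _ hx' (by rwa [e.rightInverse_symm.iterate n x])
    simp only [Set.mem_ofPred_eq, hu, hv, Function.comp_apply, map_sub, Pi.sub_apply, hc,
      Set.indicator_of_mem hxK, Set.indicator_of_notMem (hK x hxK),
      Set.indicator_of_notMem hK', Pi.one_apply, sub_zero] at h₁ h₂ h₃ h₄
    exact weight_bounds_of_norm_apply hT hw (half_lt _ h₁) h₂ (half_lt _ h₃) h₄

theorem weightCondition_of_frequently (hs : IsSolid ι) (hmeas : ∀ f, Measurable (ι f))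
    (he : IsCompInvariant ι e) (he' : IsCompInvariant ι e.symm)
    (hT : ∀ f x, ι (T f) x = (w x : ℂ) * ι f (e x)) (hw : ∀ x, 0 < w x)
    (hc : ι c = K.indicator 1) {N : ℕ} (hN : ∀ n ≥ N, ∀ x ∈ K, e^[n] x ∉ K)
    (hfreq : ∀ ε > 0, ∃ᶠ n : ℕ in atTop,
      ∃ f : 𝓕, ‖f - c‖ < ε ∧ ‖(n : ℂ)⁻¹ • (T ^ n) f - c‖ < ε) :
    WeightCondition ι e w K := by
  obtain ⟨δ, hδ, hδ₀⟩ : ∃ δ : ℕ → ℝ, (∀ m, 0 < δ m) ∧ Tendsto δ atTop (𝓝 0) :=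
    ⟨fun m => 1 / (m + 1), fun _ => Nat.one_div_pos_of_nat,
      tendsto_one_div_add_atTop_nhds_zero_nat⟩
  obtain ⟨n, hn, hnf⟩ := extraction_forall_of_frequently fun m =>
    (hfreq _ (pow_pos (hδ m) 2)).and_eventually (eventually_ge_atTop (max N 1))
  choose hfn hnN using hnf
  choose f hf hTf using hfn
  choose E hEK hEm hEind hEw using fun m => exists_subset_weight_bounds hs hmeas he he' hT hw
    hc (hN _ (le_of_max_le_left (hnN m))) (hδ m) (hf m) (hTf m)
  choose g hg hgδ using hEind
  refine ⟨E, n, hEm, hEK, hn, fun m => le_of_max_le_right (hnN m), ⟨g, hg, ?_⟩, ?_, ?_⟩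
  · exact squeeze_zero (fun _ => norm_nonneg _) hgδ
      (by simpa using ((hδ₀.pow 2).const_mul 4).add (hδ₀.const_mul 2))
  · exact tendsto_sSup_image_of_le
      (fun k x _ => mul_nonneg (Nat.cast_nonneg _) (prod_nonneg fun j _ => (inv_pos.2 (hw _)).le))
      (fun k x hx => (hEw k x hx).1) (fun k => by linarith [hδ k])
      (by simpa using hδ₀.const_mul 2)
  · exact tendsto_sSup_image_of_le
      (fun k x _ => mul_nonneg (by positivity) (prod_nonneg fun j _ => (hw _).le))
      (fun k x hx => (hEw k x hx).2) (fun k => by linarith [hδ k])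
      (by simpa using hδ₀.const_mul 2)

theorem norm_inv_natCast_smul_pow_le (hs : IsSolid ι) (hmeas : ∀ f, Measurable (ι f))
    (hinj : Function.Injective ι) (he : IsCompInvariant ι e)
    (hT : ∀ f x, ι (T f) x = (w x : ℂ) * ι f (e x)) (hw : ∀ x, 0 < w x)
    (hc : ι c = K.indicator 1) (hEK : E ⊆ K) {n : ℕ} {M C : ℝ} (hM : 0 ≤ M)
    (hME : ∀ z ∈ E, (n : ℝ)⁻¹ * ∏ j ∈ Icc 1 n, w (e.symm^[j] z) ≤ M) {f₀ f : 𝓕}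
    (hC : 0 ≤ C) (hf₀ : ∀ z, ‖ι f₀ z‖ ≤ C) (hf : ι f = E.indicator (ι f₀)) :
    ‖(n : ℂ)⁻¹ • (T ^ n) f‖ ≤ C * M * ‖c‖ := by
  obtain ⟨c', hc', hnorm⟩ := he.iterate n c
  rw [← hnorm]
  refine hs.norm_le_mul hmeas hinj (mul_nonneg hC hM) <|
    (e.symm.surjective.iterate n).forall.2 fun z => ?_
  have hz : e^[n] (e.symm^[n] z) = z := e.rightInverse_symm.iterate n z
  rw [norm_apply_inv_natCast_smul_pow hT hw, prod_range_iterate_iterate_symm, hz, hc',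
    Function.comp_apply, hz, hf]
  by_cases hzE : z ∈ E
  · rw [hc, Set.indicator_of_mem (hEK hzE), Set.indicator_of_mem hzE, Pi.one_apply, norm_one,
      mul_one, mul_comm C]
    exact mul_le_mul (hME z hzE) (hf₀ z) (norm_nonneg _) hM
  · rw [Set.indicator_of_notMem hzE, norm_zero, mul_zero]
    positivity

theorem norm_natCast_smul_pow_le (hs : IsSolid ι) (hmeas : ∀ f, Measurable (ι f))
    (hinj : Function.Injective ι) (he : IsCompInvariant ι e.symm)
    (hT : ∀ f x, ι (T f) x = (w x : ℂ) * ι f (e x)) (hw : ∀ x, 0 < w x)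
    (hTS : ∀ f, T (S f) = f) (hc : ι c = K.indicator 1) (hEK : E ⊆ K) {n : ℕ} {M C : ℝ}
    (hM : 0 ≤ M) (hME : ∀ y ∈ E, n * ∏ j ∈ range n, (w (e^[j] y))⁻¹ ≤ M) {g₀ g : 𝓕}
    (hC : 0 ≤ C) (hg₀ : ∀ y, ‖ι g₀ y‖ ≤ C) (hg : ι g = E.indicator (ι g₀)) :
    ‖(n : ℂ) • (S ^ n) g‖ ≤ C * M * ‖c‖ := by
  obtain ⟨c', hc', hnorm⟩ := he.iterate n c
  rw [← hnorm]
  refine hs.norm_le_mul hmeas hinj (mul_nonneg hC hM) <|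
    (e.surjective.iterate n).forall.2 fun y => ?_
  rw [norm_apply_natCast_smul_pow_iterate hT hw hTS, hc', Function.comp_apply,
    e.leftInverse_symm.iterate n y, hg]
  by_cases hyE : y ∈ E
  · rw [hc, Set.indicator_of_mem (hEK hyE), Set.indicator_of_mem hyE, Pi.one_apply, norm_one,
      mul_one, mul_comm C]
    exact mul_le_mul (hME y hyE) (hg₀ y) (norm_nonneg _) hM
  · rw [Set.indicator_of_notMem hyE, norm_zero, mul_zero]
    positivity

theorem exists_tendsto_of_weight_bounds (hs : IsSolid ι) (hmeas : ∀ f, Measurable (ι f))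
    (hinj : Function.Injective ι) (he : IsCompInvariant ι e) (he' : IsCompInvariant ι e.symm)
    (hT : ∀ f x, ι (T f) x = (w x : ℂ) * ι f (e x)) (hw : ∀ x, 0 < w x)
    (hTS : ∀ f, T (S f) = f) (hc : ι c = K.indicator 1) {E : ℕ → Set X} {n : ℕ → ℕ}
    {g : ℕ → 𝓕} {M₁ M₂ : ℕ → ℝ} (hEm : ∀ k, MeasurableSet (E k)) (hEK : ∀ k, E k ⊆ K)
    (hn : ∀ k, 1 ≤ n k) (hg : ∀ k, ι (g k) = (K \ E k).indicator 1)
    (hg_lim : Tendsto (fun k => ‖g k‖) atTop (𝓝 0)) (hM₁ : Tendsto M₁ atTop (𝓝 0))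
    (hM₁E : ∀ k, ∀ y ∈ E k, n k * ∏ j ∈ range (n k), (w (e^[j] y))⁻¹ ≤ M₁ k)
    (hM₂ : Tendsto M₂ atTop (𝓝 0))
    (hM₂E : ∀ k, ∀ z ∈ E k, (n k : ℝ)⁻¹ * ∏ j ∈ Icc 1 (n k), w (e.symm^[j] z) ≤ M₂ k)
    {f₀ g₀ : 𝓕} (hf₀ : ∃ C, ∀ x, ‖ι f₀ x‖ ≤ C) (hf₀K : ∀ x ∉ K, ι f₀ x = 0)
    (hg₀ : ∃ C, ∀ x, ‖ι g₀ x‖ ≤ C) (hg₀K : ∀ x ∉ K, ι g₀ x = 0) :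
    ∃ u : ℕ → 𝓕, Tendsto u atTop (𝓝 f₀) ∧
      Tendsto (fun k => (n k : ℂ)⁻¹ • (T ^ n k) (u k)) atTop (𝓝 g₀) := by
  obtain ⟨C₁, hC₁⟩ := hf₀
  obtain ⟨C₂, hC₂⟩ := hg₀
  have hC₁' x : ‖ι f₀ x‖ ≤ max C₁ 0 := (hC₁ x).trans (le_max_left _ _)
  have hC₂' x : ‖ι g₀ x‖ ≤ max C₂ 0 := (hC₂ x).trans (le_max_left _ _)
  choose a ha hfa using fun k =>
    hs.exists_indicator_eq_norm_sub_le hmeas hinj (hEm k) (le_max_right _ _) hC₁' hf₀K (hg k)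
  choose b hb hgb using fun k =>
    hs.exists_indicator_eq_norm_sub_le hmeas hinj (hEm k) (le_max_right _ _) hC₂' hg₀K (hg k)
  have hTa k : ‖(n k : ℂ)⁻¹ • (T ^ n k) (a k)‖ ≤ max C₁ 0 * max 0 (M₂ k) * ‖c‖ :=
    norm_inv_natCast_smul_pow_le hs hmeas hinj he hT hw hc (hEK k) (le_max_left _ _)
      (fun z hz => (hM₂E k z hz).trans (le_max_right _ _)) (le_max_right _ _) hC₁' (ha k)
  have hSb k : ‖(n k : ℂ) • (S ^ n k) (b k)‖ ≤ max C₂ 0 * max 0 (M₁ k) * ‖c‖ :=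
    norm_natCast_smul_pow_le hs hmeas hinj he' hT hw hTS hc (hEK k) (le_max_left _ _)
      (fun y hy => (hM₁E k y hy).trans (le_max_right _ _)) (le_max_right _ _) hC₂' (hb k)
  have hTu k : (n k : ℂ)⁻¹ • (T ^ n k) (a k + (n k : ℂ) • (S ^ n k) (b k)) =
      (n k : ℂ)⁻¹ • (T ^ n k) (a k) + b k := by
    rw [map_add, map_smul, pow_apply_pow_apply_of_rightInverse hTS, smul_add, smul_smul,
      inv_mul_cancel₀ (Nat.cast_ne_zero.2 (by have := hn k; omega)), one_smul]
  have hbound₁ : Tendsto (fun k => max C₁ 0 * ‖g k‖ + max C₂ 0 * max 0 (M₁ k) * ‖c‖) atTop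
      (𝓝 0) := by
    simpa using (hg_lim.const_mul _).add ((hM₁.max_right.const_mul _).mul_const _)
  have hbound₂ : Tendsto (fun k => max C₁ 0 * max 0 (M₂ k) * ‖c‖ + max C₂ 0 * ‖g k‖) atTop
      (𝓝 0) := by
    simpa using ((hM₂.max_right.const_mul _).mul_const _).add (hg_lim.const_mul _)
  refine ⟨fun k => a k + (n k : ℂ) • (S ^ n k) (b k), ?_, ?_⟩
  · refine tendsto_iff_norm_sub_tendsto_zero.2 <|
      squeeze_zero (fun _ => norm_nonneg _) (fun k => ?_) hbound₁
    calc ‖a k + (n k : ℂ) • (S ^ n k) (b k) - f₀‖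
        = ‖-(f₀ - a k) + (n k : ℂ) • (S ^ n k) (b k)‖ := by congr 1; abel
      _ ≤ _ := (norm_add_le _ _).trans (add_le_add (by rw [norm_neg]; exact hfa k) (hSb k))
  · refine tendsto_iff_norm_sub_tendsto_zero.2 <|
      squeeze_zero (fun _ => norm_nonneg _) (fun k => ?_) hbound₂
    calc ‖(n k : ℂ)⁻¹ • (T ^ n k) (a k + (n k : ℂ) • (S ^ n k) (b k)) - g₀‖
        = ‖(n k : ℂ)⁻¹ • (T ^ n k) (a k) + -(g₀ - b k)‖ := by rw [hTu]; congr 1; abel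
      _ ≤ _ := (norm_add_le _ _).trans (add_le_add (hTa k) (by rw [norm_neg]; exact hgb k))

theorem WeightCondition.exists_tendsto (hK : WeightCondition ι e w K) (hs : IsSolid ι)
    (hmeas : ∀ f, Measurable (ι f)) (hinj : Function.Injective ι) (he : IsCompInvariant ι e)
    (he' : IsCompInvariant ι e.symm) (hT : ∀ f x, ι (T f) x = (w x : ℂ) * ι f (e x))
    (hw : ∀ x, 0 < w x) (hw_bdd : ∃ C, ∀ x, w x ≤ C) (hw_inv_bdd : ∃ C, ∀ x, (w x)⁻¹ ≤ C)
    (hTS : ∀ f, T (S f) = f) (hc : ι c = K.indicator 1) {f₀ g₀ : 𝓕}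
    (hf₀ : ∃ C, ∀ x, ‖ι f₀ x‖ ≤ C) (hf₀K : ∀ x ∉ K, ι f₀ x = 0)
    (hg₀ : ∃ C, ∀ x, ‖ι g₀ x‖ ≤ C) (hg₀K : ∀ x ∉ K, ι g₀ x = 0) :
    ∃ n : ℕ → ℕ, StrictMono n ∧ ∃ u : ℕ → 𝓕, Tendsto u atTop (𝓝 f₀) ∧
      Tendsto (fun k => (n k : ℂ)⁻¹ • (T ^ n k) (u k)) atTop (𝓝 g₀) := by
  obtain ⟨E, n, hEm, hEK, hn, hn₁, ⟨g, hg, hg_lim⟩, hM₁, hM₂⟩ := hK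
  obtain ⟨Cw, hCw⟩ := hw_bdd
  obtain ⟨Ci, hCi⟩ := hw_inv_bdd
  exact ⟨n, hn, exists_tendsto_of_weight_bounds hs hmeas hinj he he' hT hw hTS hc hEm hEK hn₁
    hg hg_lim hM₁ (fun k y hy => le_sSup_image_mul_prod (Nat.cast_nonneg _) _
      (fun _ _ => (inv_pos.2 (hw _)).le) (fun _ _ => hCi _) hy) hM₂
    (fun k z hz => le_sSup_image_mul_prod (inv_nonneg.2 (Nat.cast_nonneg _)) _
      (fun _ _ => (hw _).le) (fun _ _ => hCw _) hz) hf₀ hf₀K hg₀ hg₀K⟩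

end WeightedCompositionOnSolidSpace

theorem cesaro_hyper_transitive_iff_weight_condition_solid_general
    {X : Type*} [TopologicalSpace X] [MeasurableSpace X]
    {𝓕 : Type*} [NormedAddCommGroup 𝓕] [NormedSpace ℂ 𝓕]
    (ι : 𝓕 →ₗ[ℂ] (X → ℂ)) (hι_inj : Function.Injective ι)
    (hι_meas : ∀ f : 𝓕, Measurable (ι f))
    (α : X ≃ₜ X)
    (haper : ∀ K : Set X, IsCompact K →
      ∃ N : ℕ, 0 < N ∧ ∀ n ≥ N, ((⇑α)^[n] '' K) ∩ K = ∅)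
    -- `𝓕` is solid:
    (hsolid : ∀ (f : 𝓕) (g : X → ℂ), Measurable g →
      (∀ x, ‖g x‖ ≤ ‖ι f x‖) → ∃ g' : 𝓕, ι g' = g ∧ ‖g'‖ ≤ ‖f‖)
    -- `𝓕` is `α`-invariant:
    (hinv : ∀ f : 𝓕, ∃ f₁ f₂ : 𝓕,
      ι f₁ = (ι f) ∘ ⇑α ∧ ‖f₁‖ = ‖f‖ ∧ ι f₂ = (ι f) ∘ ⇑α.symm ∧ ‖f₂‖ = ‖f‖)
    -- characteristic functions of compact sets belong to `𝓕`:
    (hchi : ∀ E : Set X, IsCompact E → ∃ g : 𝓕, ι g = Set.indicator E 1)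
    -- bounded compactly supported elements are dense in `𝓕`:
    (hdense : Dense {f : 𝓕 | (∃ C, ∀ x, ‖ι f x‖ ≤ C) ∧
      ∃ K : Set X, IsCompact K ∧ ∀ x ∉ K, ι f x = 0})
    (w : X → ℝ) (hw_pos : ∀ x, 0 < w x)
    (hw_bdd : ∃ C, ∀ x, w x ≤ C) (hw_inv_bdd : ∃ C, ∀ x, (w x)⁻¹ ≤ C)
    (T S : 𝓕 →L[ℂ] 𝓕)
    (hT : ∀ (f : 𝓕) (x : X), ι (T f) x = (w x : ℂ) * ι f (α x))
    (hTS : ∀ f, T (S f) = f) :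
    IsCesaroHyperTransitive T ↔
      ∀ K : Set X, IsCompact K →
        ∃ (E : ℕ → Set X) (n : ℕ → ℕ),
          (∀ k, MeasurableSet (E k)) ∧ (∀ k, E k ⊆ K) ∧
          StrictMono n ∧ (∀ k, 1 ≤ n k) ∧
          (∃ g : ℕ → 𝓕, (∀ k, ι (g k) = Set.indicator (K \ E k) 1) ∧
            Tendsto (fun k => ‖g k‖) atTop (nhds 0)) ∧
          Tendsto (fun k =>
              sSup ((fun x => (n k : ℝ) *
                ∏ j ∈ range (n k), (w ((⇑α)^[j] x))⁻¹) '' E k))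
            atTop (nhds 0) ∧
          Tendsto (fun k =>
              sSup ((fun x => ((n k : ℝ))⁻¹ *
                ∏ j ∈ Icc 1 (n k), w ((⇑α.symm)^[j] x)) '' E k))
            atTop (nhds 0) := by
  have hα : IsCompInvariant ι α.toEquiv := fun f =>
    let ⟨f₁, _, h₁, n₁, _⟩ := hinv f; ⟨f₁, h₁, n₁⟩
  have hα' : IsCompInvariant ι α.toEquiv.symm := fun f =>
    let ⟨_, f₂, _, _, h₂, n₂⟩ := hinv f; ⟨f₂, h₂, n₂⟩
  rw [isCesaroHyperTransitive_iff_frequently]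
  constructor
  · intro hCHT K hK
    obtain ⟨c, hc⟩ := hchi K hK
    obtain ⟨N, -, hN⟩ := haper K hK
    refine weightCondition_of_frequently hsolid hι_meas hα hα' hT hw_pos hc
      (fun n hn x hx hnx => (Set.eq_empty_iff_forall_notMem.1 (hN n hn)) _ ⟨⟨x, hx, rfl⟩, hnx⟩)
      fun ε hε => ?_
    exact (hCHT _ _ Metric.isOpen_ball Metric.isOpen_ball ⟨c, Metric.mem_ball_self hε⟩
      ⟨c, Metric.mem_ball_self hε⟩).mono fun n ⟨f, hf, hTf⟩ =>
        ⟨f, mem_ball_iff_norm.1 hf, mem_ball_iff_norm.1 hTf⟩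
  · intro hcond O₁ O₂ hO₁ hO₂ hO₁ne hO₂ne
    obtain ⟨f₀, ⟨hf₀, K₁, hK₁, hf₀K⟩, hf₀O⟩ := hdense.exists_mem_open hO₁ hO₁ne
    obtain ⟨g₀, ⟨hg₀, K₂, hK₂, hg₀K⟩, hg₀O⟩ := hdense.exists_mem_open hO₂ hO₂ne
    obtain ⟨c, hc⟩ := hchi _ (hK₁.union hK₂)
    obtain ⟨n, hn, u, hu, hTu⟩ := WeightCondition.exists_tendsto (hcond _ (hK₁.union hK₂))
      hsolid hι_meas hι_inj hα hα' hT hw_pos hw_bdd hw_inv_bdd hTS hc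
      hf₀ (fun x hx => hf₀K x (hx <| .inl ·)) hg₀ (fun x hx => hg₀K x (hx <| .inr ·))
    exact hn.tendsto_atTop.frequently <|
      (((hu.eventually (hO₁.mem_nhds hf₀O)).and (hTu.eventually (hO₂.mem_nhds hg₀O))).mono
        fun k hk => ⟨u k, hk⟩).frequently

/-- Characterization of topologically Cesàro hyper-transitive weighted composition operators on a
solid Banach function space `𝓕` (realized, via the injective linear map `ι`, as a space
of Borel measurable functions on `X`) satisfying condition `Ω_α`. -/
theorem cesaro_hyper_transitive_iff_weight_condition_solid
    {X : Type*} [TopologicalSpace X] [MeasurableSpace X] [BorelSpace X]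
    {𝓕 : Type*} [NormedAddCommGroup 𝓕] [NormedSpace ℂ 𝓕] [CompleteSpace 𝓕]
    (ι : 𝓕 →ₗ[ℂ] (X → ℂ)) (hι_inj : Function.Injective ι)
    (hι_meas : ∀ f : 𝓕, Measurable (ι f))
    (α : X ≃ₜ X)
    (haper : ∀ K : Set X, IsCompact K →
      ∃ N : ℕ, 0 < N ∧ ∀ n ≥ N, ((⇑α)^[n] '' K) ∩ K = ∅)
    -- `𝓕` is solid:
    (hsolid : ∀ (f : 𝓕) (g : X → ℂ), Measurable g →
      (∀ x, ‖g x‖ ≤ ‖ι f x‖) → ∃ g' : 𝓕, ι g' = g ∧ ‖g'‖ ≤ ‖f‖)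
    -- `𝓕` is `α`-invariant:
    (hinv : ∀ f : 𝓕, ∃ f₁ f₂ : 𝓕,
      ι f₁ = (ι f) ∘ ⇑α ∧ ‖f₁‖ = ‖f‖ ∧ ι f₂ = (ι f) ∘ ⇑α.symm ∧ ‖f₂‖ = ‖f‖)
    -- characteristic functions of compact sets belong to `𝓕`:
    (hchi : ∀ E : Set X, IsCompact E → ∃ g : 𝓕, ι g = Set.indicator E 1)
    -- bounded compactly supported elements are dense in `𝓕`:
    (hdense : Dense {f : 𝓕 | (∃ C, ∀ x, ‖ι f x‖ ≤ C) ∧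
      ∃ K : Set X, IsCompact K ∧ ∀ x ∉ K, ι f x = 0})
    (w : X → ℝ) (hw_meas : Measurable w) (hw_pos : ∀ x, 0 < w x)
    (hw_bdd : ∃ C, ∀ x, w x ≤ C) (hw_inv_bdd : ∃ C, ∀ x, (w x)⁻¹ ≤ C)
    (T S : 𝓕 →L[ℂ] 𝓕)
    (hT : ∀ (f : 𝓕) (x : X), ι (T f) x = (w x : ℂ) * ι f (α x))
    (hST : ∀ f, S (T f) = f) (hTS : ∀ f, T (S f) = f) :
    IsCesaroHyperTransitive T ↔
      ∀ K : Set X, IsCompact K →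
        ∃ (E : ℕ → Set X) (n : ℕ → ℕ),
          (∀ k, MeasurableSet (E k)) ∧ (∀ k, E k ⊆ K) ∧
          StrictMono n ∧ (∀ k, 1 ≤ n k) ∧
          (∃ g : ℕ → 𝓕, (∀ k, ι (g k) = Set.indicator (K \ E k) 1) ∧
            Tendsto (fun k => ‖g k‖) atTop (nhds 0)) ∧
          Tendsto (fun k =>
              sSup ((fun x => (n k : ℝ) *
                ∏ j ∈ range (n k), (w ((⇑α)^[j] x))⁻¹) '' E k))
            atTop (nhds 0) ∧
          Tendsto (fun k =>
              sSup ((fun x => ((n k : ℝ))⁻¹ *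
                ∏ j ∈ Icc 1 (n k), w ((⇑α.symm)^[j] x)) '' E k))
            atTop (nhds 0) :=
  cesaro_hyper_transitive_iff_weight_condition_solid_general ι hι_inj hι_meas α haper hsolid hinv
    hchi hdense w hw_pos hw_bdd hw_inv_bdd T S hT hTS
end

section
/- Let τ ∈ C_b(ℝ), let A_τ be the Segal algebra corresponding to τ with norm ‖·‖_τ, let w be a continuous positive function on ℝ such that w and w⁻¹ = 1/w are bounded, and let α be an aperiodic homeomorphism of ℝ with τ∘α = τ, so that T̃_{α,w}(f) = w·(f∘α) is an invertible bounded linear operator on A_τ. Then the following are equivalent: (1) T̃_{α,w} is topologically Cesàro hyper-transitive on A_τ; (2) for each ε ∈ (0,1) and every compact subset K of |τ|⁻¹([0,ε]) there exists a strictly increasing sequence (n_k) of natural numbers such that lim_{k→∞} ( sup_{t∈K} n_k⁻¹·∏_{j=0}^{n_k−1} w(α^{j−n_k}(t)) ) = 0 = lim_{k→∞} ( sup_{t∈K} n_k·∏_{j=0}^{n_k−1} (w(α^j(t)))⁻¹ ). -/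
open Filter Finset

open Topology

/-!
Sufficiency is a Cesàro form of the hypercyclicity criterion. Functions vanishing off a compact
set on which `|τ| ≤ ε < 1` are dense in `A_τ`: an element of `A_τ` vanishes where `|τ| ≥ 1`, so
it can be cut off outside the compact set where it is `≥ δ`, and the Segal norm of the error,
`∑ₖ min (‖f τᵏ‖_∞, δ Cᵏ)`, tends to `0` with `δ` by dominated convergence. Since `τ ∘ α = τ`,
composing with `α^{±n}` does not change any term `‖· τᵏ‖_∞`, so on such functions `‖n⁻¹ Tⁿ f‖`
and `‖n Sⁿ g‖` are bounded by the two suprema of the weight condition times the norm.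

For necessity, test transitivity on a ball around a bump `φ` equal to `1` on `K`. Aperiodicity
moves `K` off the support of `φ` under `α^{±n}` for large `n`, so a function `f` close to `φ`
whose average `n⁻¹ Tⁿ f` is also close to `φ` must be large at `t ∈ K` and small at `α^{±n} t`,
which bounds both weight products on `K`.
-/

theorem Function.apply_iterate_eq_of_apply_eq {X Y : Type*} {f : X → X} {τ : X → Y}
    (h : ∀ t, τ (f t) = τ t) (n : ℕ) (t : X) : τ (f^[n] t) = τ t := by
  induction n with
  | zero => rfl
  | succ n ih => rw [Function.iterate_succ_apply', h, ih]

namespace Homeomorph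

variable {X : Type*} [TopologicalSpace X] (α : X ≃ₜ X)

theorem iterate_apply_iterate_symm (n : ℕ) (t : X) : α^[n] (α.symm^[n] t) = t :=
  Function.RightInverse.iterate α.apply_symm_apply n t

theorem iterate_symm_apply_iterate (n : ℕ) (t : X) : α.symm^[n] (α^[n] t) = t :=
  Function.LeftInverse.iterate α.symm_apply_apply n t

theorem iterate_apply_iterate_symm_of_le {j n : ℕ} (h : j ≤ n) (t : X) :
    α^[j] (α.symm^[n] t) = α.symm^[n - j] t := by
  obtain ⟨m, rfl⟩ := Nat.exists_eq_add_of_le h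
  rw [Nat.add_sub_cancel_left, Function.iterate_add_apply, iterate_apply_iterate_symm]

theorem apply_symm_eq_of_apply_eq {Y : Type*} {τ : X → Y} (h : ∀ t, τ (α t) = τ t) (t : X) :
    τ (α.symm t) = τ t := by
  rw [← h (α.symm t), α.apply_symm_apply]

end Homeomorph

theorem IsCompact.exists_forall_lt_of_forall_lt {X : Type*} [TopologicalSpace X] {A : Set X}
    (hA : IsCompact A) {u : X → ℝ} (hu : ContinuousOn u A) {b : ℝ} (h : ∀ t ∈ A, u t < b) :
    ∃ c < b, ∀ t ∈ A, u t < c := by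
  rcases A.eq_empty_or_nonempty with rfl | hne
  · exact ⟨b - 1, by linarith, by simp⟩
  obtain ⟨t₀, ht₀, hmax⟩ := hA.exists_isMaxOn hne hu
  have := h t₀ ht₀
  exact ⟨(u t₀ + b) / 2, by linarith, fun t ht => by
    have : u t ≤ u t₀ := hmax ht
    linarith⟩

theorem isCompact_setOf_le_norm {X E : Type*} [TopologicalSpace X] [NormedAddCommGroup E]
    {g : X → E} (hg : Continuous g) (h0 : Tendsto g (cocompact X) (𝓝 0)) {δ : ℝ}
    (hδ : 0 < δ) : IsCompact {t | δ ≤ ‖g t‖} := by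
  obtain ⟨K, hK, hKsub⟩ := mem_cocompact.1 (h0 (Metric.ball_mem_nhds 0 hδ))
  refine hK.of_isClosed_subset (isClosed_le continuous_const hg.norm) fun t ht => ?_
  by_contra htK
  exact not_lt.2 ht (by simpa using hKsub htK)

theorem exists_cutoff_of_lt_one {X : Type*} [TopologicalSpace X] [RegularSpace X]
    [LocallyCompactSpace X] {u : X → ℝ} (hu : Continuous u) {A : Set X} (hA : IsCompact A)
    (hA1 : ∀ t ∈ A, u t < 1) :
    ∃ (χ : C(X, ℝ)) (ε : ℝ), 0 < ε ∧ ε < 1 ∧ Set.EqOn χ 1 A ∧ HasCompactSupport χ ∧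
      (∀ t, χ t ∈ Set.Icc 0 1) ∧ ∀ t ∈ tsupport χ, u t ≤ ε := by
  obtain ⟨c, hc1, hc⟩ := hA.exists_forall_lt_of_forall_lt hu.continuousOn hA1
  set ε := max c (1 / 2)
  obtain ⟨χ, hχA, hχ0, hχc, hχI⟩ := exists_continuous_one_zero_of_isCompact hA
    (isClosed_le continuous_const hu) (t := {t | ε ≤ u t})
    (Set.disjoint_left.2 fun t ht hle => not_lt.2 hle ((hc t ht).trans_le (le_max_left _ _)))
  refine ⟨χ, ε, by positivity, max_lt hc1 (by norm_num), hχA, hχc, hχI, fun t ht => ?_⟩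
  refine closure_minimal (fun s (hs : χ s ≠ 0) => ?_) (isClosed_le hu continuous_const) ht
  exact le_of_not_gt fun hlt => hs (hχ0 (show ε ≤ u s from hlt.le))

theorem tendsto_tsum_min_mul {a b : ℕ → ℝ} (ha : Summable a) (ha0 : ∀ k, 0 ≤ a k)
    (hb0 : ∀ k, 0 ≤ b k) :
    Tendsto (fun δ => ∑' k, min (a k) (δ * b k)) (𝓝[>] 0) (𝓝 0) := by
  have := tendsto_tsum_of_dominated_convergence (𝓕 := 𝓝[>] (0 : ℝ)) ha
    (f := fun δ k => min (a k) (δ * b k)) (g := fun _ => 0) (fun k => ?_) ?_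
  · simpa using this
  · have hcont : Continuous fun δ : ℝ => min (a k) (δ * b k) := by fun_prop
    simpa only [zero_mul, min_eq_right (ha0 k)] using
      (hcont.tendsto 0).mono_left nhdsWithin_le_nhds
  · filter_upwards [self_mem_nhdsWithin] with δ hδ k
    rw [Real.norm_of_nonneg (le_min (ha0 k) (mul_nonneg (le_of_lt hδ) (hb0 k)))]
    exact min_le_left _ _

theorem exists_strictMono_tendsto_zero_of_frequently {u v : ℕ → ℝ} (hu : ∀ n, 0 ≤ u n)
    (hv : ∀ n, 0 ≤ v n) (h : ∀ δ > 0, ∃ᶠ n in atTop, u n ≤ δ ∧ v n ≤ δ) :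
    ∃ φ : ℕ → ℕ, StrictMono φ ∧ (∀ k, 1 ≤ φ k) ∧
      Tendsto (u ∘ φ) atTop (𝓝 0) ∧ Tendsto (v ∘ φ) atTop (𝓝 0) := by
  obtain ⟨φ, hφ, hφP⟩ := extraction_forall_of_frequently fun m : ℕ =>
    (h (1 / (m + 1)) (by positivity)).and_eventually (eventually_ge_atTop 1)
  exact ⟨φ, hφ, fun k => (hφP k).2,
    squeeze_zero (fun k => hu _) (fun k => (hφP k).1.1) tendsto_one_div_add_atTop_nhds_zero_nat,
    squeeze_zero (fun k => hv _) (fun k => (hφP k).1.2) tendsto_one_div_add_atTop_nhds_zero_nat⟩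

/-- A Cesàro version of the hypercyclicity criterion, for an operator with a right inverse. -/
theorem isCesaroHyperTransitive_of_rightInverse {E : Type*} [NormedAddCommGroup E]
    [NormedSpace ℂ E] {T S : E →L[ℂ] E} (hTS : T * S = 1)
    (h : ∀ f g : E, ∀ η > 0, ∃ f₀ g₀ : E, ‖f₀ - f‖ < η ∧ ‖g₀ - g‖ < η ∧
      ∃ n : ℕ → ℕ, StrictMono n ∧ (∀ k, 1 ≤ n k) ∧
        Tendsto (fun k => (n k : ℂ)⁻¹ • (T ^ n k) f₀) atTop (𝓝 0) ∧
        Tendsto (fun k => (n k : ℂ) • (S ^ n k) g₀) atTop (𝓝 0)) :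
    IsCesaroHyperTransitive T := by
  intro O₁ O₂ hO₁ hO₂ ⟨f, hf⟩ ⟨g, hg⟩
  obtain ⟨r₁, hr₁, hball₁⟩ := Metric.isOpen_iff.1 hO₁ f hf
  obtain ⟨r₂, hr₂, hball₂⟩ := Metric.isOpen_iff.1 hO₂ g hg
  set r := min r₁ r₂
  have hr : 0 < r / 2 := by positivity
  obtain ⟨f₀, g₀, hf₀, hg₀, n, hn, hn1, hTf₀, hSg₀⟩ := h f g (r / 2) hr
  obtain ⟨N, hN⟩ := eventually_atTop.1 ((hTf₀.eventually (Metric.ball_mem_nhds 0 hr)).and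
    (hSg₀.eventually (Metric.ball_mem_nhds 0 hr)))
  refine ⟨fun k => n (k + N), hn.comp (strictMono_id.add_const N), fun k => hn1 _, fun k => ?_⟩
  obtain ⟨hTk, hSk⟩ := hN (k + N) (Nat.le_add_left N k)
  rw [dist_zero_right] at hTk hSk
  have hν : (n (k + N) : ℂ) ≠ 0 := Nat.cast_ne_zero.2 (Nat.one_le_iff_ne_zero.1 (hn1 _))
  -- `n⁻¹ Tⁿ` maps the witness `f₀ + n Sⁿ g₀` to `n⁻¹ Tⁿ f₀ + g₀`.
  refine ⟨f₀ + (n (k + N) : ℂ) • (S ^ n (k + N)) g₀, hball₁ ?_, hball₂ ?_⟩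
  · rw [Metric.mem_ball, dist_eq_norm, add_sub_right_comm]
    calc _ ≤ ‖f₀ - f‖ + ‖(n (k + N) : ℂ) • (S ^ n (k + N)) g₀‖ := norm_add_le _ _
      _ < r / 2 + r / 2 := add_lt_add hf₀ hSk
      _ ≤ r₁ := by linarith [min_le_left r₁ r₂]
  · rw [map_add, map_smul, ← mul_apply_eq_comp, pow_mul_pow_eq_one _ hTS, one_apply_eq_self,
      smul_add, inv_smul_smul₀ hν, Metric.mem_ball, dist_eq_norm, add_sub_assoc]
    calc _ ≤ ‖(n (k + N) : ℂ)⁻¹ • (T ^ n (k + N)) f₀‖ + ‖g₀ - g‖ := norm_add_le _ _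
      _ < r / 2 + r / 2 := add_lt_add hTk hg₀
      _ ≤ r₂ := by linarith [min_le_right r₁ r₂]

section WeightedComposition

variable {X : Type*}

def weightProd (w : X → ℝ) (α : X → X) (n : ℕ) (t : X) : ℝ :=
  ∏ j ∈ range n, w (α^[j] t)

theorem weightProd_succ (w : X → ℝ) (α : X → X) (n : ℕ) (t : X) :
    weightProd w α (n + 1) t = weightProd w α n t * w (α^[n] t) :=
  prod_range_succ _ n

theorem weightProd_pos {w : X → ℝ} (hw : ∀ t, 0 < w t) (α : X → X) (n : ℕ) (t : X) :
    0 < weightProd w α n t :=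
  prod_pos fun _ _ => hw _

theorem continuous_weightProd [TopologicalSpace X] {w : X → ℝ} {α : X → X} (hw : Continuous w)
    (hα : Continuous α) (n : ℕ) : Continuous (weightProd w α n) :=
  continuous_finsetProd _ fun _ _ => hw.comp (hα.iterate _)

theorem prod_range_symm_iterate_sub [TopologicalSpace X] (w : X → ℝ) (α : X ≃ₜ X) (n : ℕ)
    (t : X) : ∏ j ∈ range n, w (α.symm^[n - j] t) = weightProd w α n (α.symm^[n] t) :=
  prod_congr rfl fun j hj => by
    rw [α.iterate_apply_iterate_symm_of_le (mem_range.1 hj).le]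

variable {𝓐 : Type*} [NormedAddCommGroup 𝓐] [NormedSpace ℂ 𝓐]

def IsWeightedComposition (ι : 𝓐 →ₗ[ℂ] (X → ℂ)) (w : X → ℝ) (α : X → X) (T : 𝓐 →L[ℂ] 𝓐) :
    Prop :=
  ∀ f t, ι (T f) t = w t * ι f (α t)

variable {ι : 𝓐 →ₗ[ℂ] (X → ℂ)} {w : X → ℝ}

theorem IsWeightedComposition.pow_apply {α : X → X} {T : 𝓐 →L[ℂ] 𝓐}
    (hT : IsWeightedComposition ι w α T) (n : ℕ) (f : 𝓐) (t : X) :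
    ι ((T ^ n) f) t = weightProd w α n t * ι f (α^[n] t) := by
  induction n generalizing f with
  | zero => simp [weightProd]
  | succ n ih =>
    rw [pow_succ, mul_apply_eq_comp, ih, hT, weightProd_succ, Function.iterate_succ_apply']
    push_cast
    ring

theorem IsWeightedComposition.pow_rightInverse_apply [TopologicalSpace X] {α : X ≃ₜ X}
    {T S : 𝓐 →L[ℂ] 𝓐} (hT : IsWeightedComposition ι w α T) (hw : ∀ t, 0 < w t)
    (hTS : T * S = 1) (n : ℕ) (g : 𝓐) (t : X) :
    ι ((S ^ n) g) t = (weightProd w α n (α.symm^[n] t) : ℂ)⁻¹ * ι g (α.symm^[n] t) := by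
  have h := hT.pow_apply n ((S ^ n) g) (α.symm^[n] t)
  rw [← mul_apply_eq_comp, pow_mul_pow_eq_one n hTS, one_apply_eq_self,
    α.iterate_apply_iterate_symm] at h
  rw [h, inv_mul_cancel_left₀ (by exact_mod_cast (weightProd_pos hw _ n _).ne')]

theorem IsWeightedComposition.norm_apply_inv_smul_pow {α : X → X} {T : 𝓐 →L[ℂ] 𝓐}
    (hT : IsWeightedComposition ι w α T) (hw : ∀ t, 0 < w t) (n : ℕ) (f : 𝓐) (t : X) :
    ‖ι ((n : ℂ)⁻¹ • (T ^ n) f) t‖ = (n : ℝ)⁻¹ * weightProd w α n t * ‖ι f (α^[n] t)‖ := by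
  rw [map_smul, Pi.smul_apply, hT.pow_apply, smul_eq_mul, ← mul_assoc, norm_mul, norm_mul,
    norm_inv, Complex.norm_natCast, Complex.norm_real,
    Real.norm_of_nonneg (weightProd_pos hw _ n t).le]

theorem IsWeightedComposition.norm_apply_smul_pow_rightInverse [TopologicalSpace X]
    {α : X ≃ₜ X} {T S : 𝓐 →L[ℂ] 𝓐} (hT : IsWeightedComposition ι w α T) (hw : ∀ t, 0 < w t)
    (hTS : T * S = 1) (n : ℕ) (g : 𝓐) (t : X) :
    ‖ι ((n : ℂ) • (S ^ n) g) t‖ =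
      (n : ℝ) * (weightProd w α n (α.symm^[n] t))⁻¹ * ‖ι g (α.symm^[n] t)‖ := by
  rw [map_smul, Pi.smul_apply, hT.pow_rightInverse_apply hw hTS, smul_eq_mul, ← mul_assoc,
    norm_mul, norm_mul, norm_inv, Complex.norm_natCast, Complex.norm_real,
    Real.norm_of_nonneg (weightProd_pos hw _ n _).le]

theorem IsWeightedComposition.weightProd_le_of_near [TopologicalSpace X] {α : X ≃ₜ X}
    {T : 𝓐 →L[ℂ] 𝓐} (hT : IsWeightedComposition ι w α T) (hw : ∀ t, 0 < w t) {φ f : 𝓐} {ν : ℕ}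
    {δ : ℝ} (hδ : 0 < δ) (hδ1 : δ ≤ 1 / 2) (hf : ∀ s, ‖ι f s - ι φ s‖ < δ)
    (hv : ∀ s, ‖ι ((ν : ℂ)⁻¹ • (T ^ ν) f) s - ι φ s‖ < δ) {t : X} (ht : ι φ t = 1)
    (hfwd : ι φ (α^[ν] t) = 0) (hbwd : ι φ (α.symm^[ν] t) = 0) :
    (ν : ℝ)⁻¹ * weightProd w α ν (α.symm^[ν] t) ≤ 2 * δ ∧
      (ν : ℝ) * (weightProd w α ν t)⁻¹ ≤ 2 * δ := by
  have large : ∀ g : 𝓐, (∀ s, ‖ι g s - ι φ s‖ < δ) → 1 / 2 < ‖ι g t‖ := fun g hg => by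
    have := norm_sub_norm_le (1 : ℂ) (ι g t)
    rw [norm_one, norm_sub_rev, ← ht] at this
    linarith [hg t]
  have small : ∀ g : 𝓐, (∀ s, ‖ι g s - ι φ s‖ < δ) → ∀ s, ι φ s = 0 → ‖ι g s‖ < δ :=
    fun g hg s hs => by simpa [hs] using hg s
  have hvbwd := small _ hv _ hbwd
  have hvt := large _ hv
  rw [hT.norm_apply_inv_smul_pow hw, α.iterate_apply_iterate_symm] at hvbwd
  rw [hT.norm_apply_inv_smul_pow hw] at hvt
  have hft := large f hf
  have hffwd := small f hf _ hfwd
  have hW := weightProd_pos hw α ν t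
  constructor
  · nlinarith [inv_nonneg.2 (Nat.cast_nonneg (α := ℝ) ν)]
  · have hy : 1 / 2 < (ν : ℝ)⁻¹ * weightProd w α ν t * δ :=
      hvt.trans_le (mul_le_mul_of_nonneg_left hffwd.le (by positivity))
    have hy0 : 0 < (ν : ℝ)⁻¹ * weightProd w α ν t := pos_of_mul_pos_left (by linarith) hδ.le
    rw [← inv_inv (ν : ℝ), ← mul_inv, inv_le_iff_one_le_mul₀ hy0]
    linarith

end WeightedComposition

/-- `‖g τᵏ‖_∞`, the `k`-th term of the Segal norm (`0` if `g τᵏ` is unbounded). -/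
noncomputable def supNormMulPow (τ g : ℝ → ℂ) (k : ℕ) : ℝ :=
  ⨆ t, ‖g t * τ t ^ k‖

theorem supNormMulPow_nonneg (τ g : ℝ → ℂ) (k : ℕ) : 0 ≤ supNormMulPow τ g k :=
  Real.iSup_nonneg fun _ => norm_nonneg _

/-- `ι` identifies `𝓐` isometrically with the Segal algebra `A_τ`. -/
structure IsSegalRealization {𝓐 : Type*} [NormedAddCommGroup 𝓐] [NormedSpace ℂ 𝓐]
    (τ : ℝ → ℂ) (ι : 𝓐 →ₗ[ℂ] (ℝ → ℂ)) : Prop where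
  exists_eq_iff : ∀ g : ℝ → ℂ, (∃ f : 𝓐, ι f = g) ↔
    Continuous g ∧ Tendsto g (cocompact ℝ) (𝓝 0) ∧ Summable (supNormMulPow τ g)
  norm_eq : ∀ f : 𝓐, ‖f‖ = ∑' k, supNormMulPow τ (ι f) k

namespace IsSegalRealization

variable {𝓐 : Type*} [NormedAddCommGroup 𝓐] [NormedSpace ℂ 𝓐] {τ : ℝ → ℂ}
  {ι : 𝓐 →ₗ[ℂ] (ℝ → ℂ)} (hA : IsSegalRealization τ ι)
include hA

theorem continuous (f : 𝓐) : Continuous (ι f) :=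
  ((hA.exists_eq_iff _).1 ⟨f, rfl⟩).1

theorem tendsto_cocompact (f : 𝓐) : Tendsto (ι f) (cocompact ℝ) (𝓝 0) :=
  ((hA.exists_eq_iff _).1 ⟨f, rfl⟩).2.1

theorem summable (f : 𝓐) : Summable (supNormMulPow τ (ι f)) :=
  ((hA.exists_eq_iff _).1 ⟨f, rfl⟩).2.2

theorem exists_norm_apply_le (f : 𝓐) : ∃ M, ∀ t, ‖ι f t‖ ≤ M := by
  obtain ⟨M, hM⟩ := isBounded_iff_forall_norm_le.1
    (ZeroAtInftyContinuousMap.isBounded_range ⟨⟨ι f, hA.continuous f⟩, hA.tendsto_cocompact f⟩)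
  exact ⟨M, fun t => hM _ ⟨t, rfl⟩⟩

theorem norm_mul_pow_le_supNormMulPow {C : ℝ} (hC : ∀ t, ‖τ t‖ ≤ C) (f : 𝓐) (k : ℕ) (t : ℝ) :
    ‖ι f t * τ t ^ k‖ ≤ supNormMulPow τ (ι f) k := by
  obtain ⟨M, hM⟩ := hA.exists_norm_apply_le f
  refine le_ciSup (f := fun s => ‖ι f s * τ s ^ k‖) ⟨M * C ^ k, ?_⟩ t
  rintro _ ⟨s, rfl⟩
  simp only [norm_mul, norm_pow]
  exact mul_le_mul (hM s) (pow_le_pow_left₀ (norm_nonneg _) (hC s) k) (by positivity)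
    ((norm_nonneg _).trans (hM s))

theorem norm_apply_le_norm (f : 𝓐) (t : ℝ) : ‖ι f t‖ ≤ ‖f‖ := by
  obtain ⟨M, hM⟩ := hA.exists_norm_apply_le f
  calc ‖ι f t‖ = ‖ι f t * τ t ^ 0‖ := by simp
    _ ≤ supNormMulPow τ (ι f) 0 :=
      le_ciSup (f := fun s => ‖ι f s * τ s ^ 0‖) ⟨M, by rintro _ ⟨s, rfl⟩; simpa using hM s⟩ t
    _ ≤ ‖f‖ := hA.norm_eq f ▸ (hA.summable f).le_tsum 0 fun k _ => supNormMulPow_nonneg _ _ k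

theorem norm_apply_sub_apply_lt {f φ : 𝓐} {δ : ℝ} (h : f ∈ Metric.ball φ δ) (t : ℝ) :
    ‖ι f t - ι φ t‖ < δ := by
  rw [Metric.mem_ball, dist_eq_norm] at h
  simpa only [map_sub, Pi.sub_apply] using (hA.norm_apply_le_norm (f - φ) t).trans_lt h

theorem apply_eq_zero_of_one_le_norm {C : ℝ} (hC : ∀ t, ‖τ t‖ ≤ C) (f : 𝓐) {t : ℝ}
    (ht : 1 ≤ ‖τ t‖) : ι f t = 0 := by
  refine norm_le_zero_iff.1 (ge_of_tendsto' (hA.summable f).tendsto_atTop_zero fun k => ?_)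
  calc ‖ι f t‖ ≤ ‖ι f t‖ * ‖τ t‖ ^ k := le_mul_of_one_le_right (norm_nonneg _) (one_le_pow₀ ht)
    _ = ‖ι f t * τ t ^ k‖ := by rw [norm_mul, norm_pow]
    _ ≤ supNormMulPow τ (ι f) k := hA.norm_mul_pow_le_supNormMulPow hC f k t

theorem norm_le_mul_norm_of_forall {C : ℝ} (hC : ∀ t, ‖τ t‖ ≤ C) {f g : 𝓐} {σ : ℝ → ℝ}
    (hσ : ∀ t, τ (σ t) = τ t) {c : ℝ} (hc : 0 ≤ c) (h : ∀ t, ‖ι g t‖ ≤ c * ‖ι f (σ t)‖) :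
    ‖g‖ ≤ c * ‖f‖ := by
  rw [hA.norm_eq, hA.norm_eq, ← tsum_mul_left]
  refine (hA.summable g).tsum_le_tsum (fun k => ?_) ((hA.summable f).mul_left c)
  refine Real.iSup_le (fun t => ?_) (mul_nonneg hc (supNormMulPow_nonneg _ _ k))
  calc ‖ι g t * τ t ^ k‖ = ‖ι g t‖ * ‖τ (σ t)‖ ^ k := by rw [norm_mul, norm_pow, hσ]
    _ ≤ c * ‖ι f (σ t)‖ * ‖τ (σ t)‖ ^ k := by gcongr; exact h t
    _ = c * ‖ι f (σ t) * τ (σ t) ^ k‖ := by rw [norm_mul, norm_pow, mul_assoc]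
    _ ≤ c * supNormMulPow τ (ι f) k := by
      gcongr; exact hA.norm_mul_pow_le_supNormMulPow hC f k (σ t)

theorem norm_le_tsum_min {C : ℝ} (hC : ∀ t, ‖τ t‖ ≤ C) {f g : 𝓐} {δ : ℝ} (hδ : 0 ≤ δ)
    (hle : ∀ t, ‖ι g t‖ ≤ ‖ι f t‖) (hsmall : ∀ t, ι g t ≠ 0 → ‖ι f t‖ ≤ δ) :
    ‖g‖ ≤ ∑' k, min (supNormMulPow τ (ι f) k) (δ * C ^ k) := by
  have hC0 : 0 ≤ C := (norm_nonneg _).trans (hC 0)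
  rw [hA.norm_eq]
  refine (hA.summable g).tsum_le_tsum (fun k => ?_) ((hA.summable f).of_nonneg_of_le
    (fun k => le_min (supNormMulPow_nonneg _ _ k) (by positivity)) fun k => min_le_left _ _)
  refine Real.iSup_le (fun t => le_min ?_ ?_) (le_min (supNormMulPow_nonneg _ _ k) (by positivity))
  · calc ‖ι g t * τ t ^ k‖ ≤ ‖ι f t * τ t ^ k‖ := by
          rw [norm_mul, norm_mul]; gcongr; exact hle t
      _ ≤ supNormMulPow τ (ι f) k := hA.norm_mul_pow_le_supNormMulPow hC f k t
  · rw [norm_mul, norm_pow]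
    by_cases hg : ι g t = 0
    · rw [hg, norm_zero, zero_mul]; positivity
    · exact mul_le_mul (hle t |>.trans (hsmall t hg)) (pow_le_pow_left₀ (norm_nonneg _) (hC t) k)
        (by positivity) hδ

theorem exists_eq_mul {C : ℝ} (hC : ∀ t, ‖τ t‖ ≤ C) (f : 𝓐) {h : ℝ → ℂ} (hh : Continuous h)
    (hh1 : ∀ t, ‖h t‖ ≤ 1) : ∃ g : 𝓐, ι g = h * ι f := by
  have hle : ∀ t, ‖(h * ι f) t‖ ≤ ‖ι f t‖ := fun t => by
    rw [Pi.mul_apply, norm_mul]; exact mul_le_of_le_one_left (norm_nonneg _) (hh1 t)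
  refine (hA.exists_eq_iff _).2 ⟨hh.mul (hA.continuous f), ?_, ?_⟩
  · exact squeeze_zero_norm hle (tendsto_zero_iff_norm_tendsto_zero.1 (hA.tendsto_cocompact f))
  · refine (hA.summable f).of_nonneg_of_le (supNormMulPow_nonneg _ _) fun k => ?_
    refine Real.iSup_le (fun t => ?_) (supNormMulPow_nonneg _ _ k)
    calc ‖(h * ι f) t * τ t ^ k‖ ≤ ‖ι f t * τ t ^ k‖ := by
          rw [norm_mul, norm_mul]; gcongr; exact hle t
      _ ≤ supNormMulPow τ (ι f) k := hA.norm_mul_pow_le_supNormMulPow hC f k t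

theorem exists_eq_of_hasCompactSupport {g : ℝ → ℂ} (hg : Continuous g) (hgc : HasCompactSupport g)
    (hg1 : ∀ t, ‖g t‖ ≤ 1) {ε : ℝ} (hε0 : 0 ≤ ε) (hε1 : ε < 1)
    (hτg : ∀ t ∈ tsupport g, ‖τ t‖ ≤ ε) : ∃ f : 𝓐, ι f = g := by
  refine (hA.exists_eq_iff _).2 ⟨hg, hgc.is_zero_at_infty, ?_⟩
  refine (summable_geometric_of_lt_one hε0 hε1).of_nonneg_of_le (supNormMulPow_nonneg _ _)
    fun k => Real.iSup_le (fun t => ?_) (by positivity)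
  by_cases ht : t ∈ tsupport g
  · rw [norm_mul, norm_pow]
    calc ‖g t‖ * ‖τ t‖ ^ k ≤ 1 * ε ^ k := by gcongr; exacts [hg1 t, hτg t ht]
      _ = ε ^ k := one_mul _
  · rw [image_eq_zero_of_notMem_tsupport ht, zero_mul, norm_zero]; positivity

theorem exists_near_vanishing_off_compact (hτ : Continuous τ) {C : ℝ} (hC : ∀ t, ‖τ t‖ ≤ C)
    (f : 𝓐) {η : ℝ} (hη : 0 < η) :
    ∃ f₀ : 𝓐, ‖f₀ - f‖ < η ∧ ∃ K ε, IsCompact K ∧ (∀ t ∉ K, ι f₀ t = 0) ∧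
      0 < ε ∧ ε < 1 ∧ ∀ t ∈ K, ‖τ t‖ ≤ ε := by
  have hC0 : 0 ≤ C := (norm_nonneg _).trans (hC 0)
  obtain ⟨δ, hδη, hδ⟩ := (((tendsto_tsum_min_mul (hA.summable f) (supNormMulPow_nonneg τ _)
    fun k => pow_nonneg hC0 k).eventually (gt_mem_nhds hη)).and self_mem_nhdsWithin).exists
  -- Cut `f` off outside the compact set where `|f| ≥ δ`; there `|τ| < 1`.
  obtain ⟨χ, ε, hε0, hε1, hχ1, hχc, hχI, hτχ⟩ := exists_cutoff_of_lt_one hτ.norm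
    (isCompact_setOf_le_norm (hA.continuous f) (hA.tendsto_cocompact f) hδ) fun t ht =>
      lt_of_not_ge fun h1 => not_le.2 hδ (by
        simpa [hA.apply_eq_zero_of_one_le_norm hC f h1] using ht)
  have hχ1' : ∀ t, ‖(χ t : ℂ)‖ ≤ 1 := fun t => by
    rw [Complex.norm_real, Real.norm_of_nonneg (hχI t).1]; exact (hχI t).2
  obtain ⟨f₀, hf₀⟩ := hA.exists_eq_mul hC f (Complex.continuous_ofReal.comp χ.continuous) hχ1'
  have hsub : ∀ t, ι (f₀ - f) t = ((χ t - 1 : ℝ) : ℂ) * ι f t := fun t => by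
    rw [map_sub, hf₀]; push_cast; simp only [Pi.sub_apply, Pi.mul_apply, Function.comp_apply]; ring
  refine ⟨f₀, ?_, tsupport χ, ε, hχc, fun t ht => ?_, hε0, hε1, hτχ⟩
  · refine lt_of_le_of_lt (hA.norm_le_tsum_min hC hδ.le (fun t => ?_) fun t ht => ?_) hδη
    · rw [hsub, norm_mul, Complex.norm_real, Real.norm_eq_abs]
      exact mul_le_of_le_one_left (norm_nonneg _) (abs_le.2 ⟨by linarith [(hχI t).1],
        by linarith [(hχI t).2]⟩)
    · by_contra hbig
      rw [hsub, hχ1 (not_le.1 hbig).le] at ht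
      simp at ht
  · rw [hf₀, Pi.mul_apply, Function.comp_apply, image_eq_zero_of_notMem_tsupport ht]
    simp

end IsSegalRealization

/-- Condition (2) of the theorem, with `∏_{j<n} w (α^{j-n} t)` written as
`weightProd w α n (α^{-n} t)`. -/
def CesaroWeightCondition (τ : ℝ → ℂ) (α : ℝ ≃ₜ ℝ) (w : ℝ → ℝ) : Prop :=
  ∀ ε : ℝ, 0 < ε → ε < 1 → ∀ K : Set ℝ, IsCompact K → (∀ t ∈ K, ‖τ t‖ ≤ ε) →
    ∃ n : ℕ → ℕ, StrictMono n ∧ (∀ k, 1 ≤ n k) ∧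
      Tendsto (fun k => sSup ((fun t => (n k : ℝ)⁻¹ * weightProd w α (n k) (α.symm^[n k] t)) '' K))
        atTop (𝓝 0) ∧
      Tendsto (fun k => sSup ((fun t => (n k : ℝ) * (weightProd w α (n k) t)⁻¹) '' K))
        atTop (𝓝 0)

def IsAperiodic {X : Type*} [TopologicalSpace X] (α : X → X) : Prop :=
  ∀ K : Set X, IsCompact K → ∃ N : ℕ, 0 < N ∧ ∀ n ≥ N, α^[n] '' K ∩ K = ∅

namespace IsWeightedComposition

variable {𝓐 : Type*} [NormedAddCommGroup 𝓐] [NormedSpace ℂ 𝓐] {τ : ℝ → ℂ}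
  {ι : 𝓐 →ₗ[ℂ] (ℝ → ℂ)} {α : ℝ ≃ₜ ℝ} {w : ℝ → ℝ} {T S : 𝓐 →L[ℂ] 𝓐}
  (hT : IsWeightedComposition ι w α T) (hA : IsSegalRealization τ ι) {C : ℝ}
  (hC : ∀ t, ‖τ t‖ ≤ C) (hτα : ∀ t, τ (α t) = τ t) (hw : ∀ t, 0 < w t)
include hT hA hC hτα hw

theorem norm_inv_smul_pow_le {K : Set ℝ} {f : 𝓐} (hf : ∀ t ∉ K, ι f t = 0) (n : ℕ) {c : ℝ}
    (hc : 0 ≤ c) (hK : ∀ t ∈ K, (n : ℝ)⁻¹ * weightProd w α n (α.symm^[n] t) ≤ c) :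
    ‖(n : ℂ)⁻¹ • (T ^ n) f‖ ≤ c * ‖f‖ := by
  refine hA.norm_le_mul_norm_of_forall hC (Function.apply_iterate_eq_of_apply_eq hτα n) hc
    fun t => ?_
  rw [hT.norm_apply_inv_smul_pow hw]
  by_cases ht : α^[n] t ∈ K
  · gcongr
    simpa only [α.iterate_symm_apply_iterate] using hK _ ht
  · rw [hf _ ht, norm_zero, mul_zero, mul_zero]

theorem norm_smul_pow_le (hTS : T * S = 1) {K : Set ℝ} {g : 𝓐} (hg : ∀ t ∉ K, ι g t = 0)
    (n : ℕ) {c : ℝ} (hc : 0 ≤ c) (hK : ∀ t ∈ K, (n : ℝ) * (weightProd w α n t)⁻¹ ≤ c) :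
    ‖(n : ℂ) • (S ^ n) g‖ ≤ c * ‖g‖ := by
  refine hA.norm_le_mul_norm_of_forall hC (Function.apply_iterate_eq_of_apply_eq
    (α.apply_symm_eq_of_apply_eq hτα) n) hc fun t => ?_
  rw [hT.norm_apply_smul_pow_rightInverse hw hTS]
  by_cases ht : α.symm^[n] t ∈ K
  · gcongr
    exact hK _ ht
  · rw [hg _ ht, norm_zero, mul_zero, mul_zero]

theorem isCesaroHyperTransitive (hτ : Continuous τ) (hw_cont : Continuous w) (hTS : T * S = 1)
    (hcond : CesaroWeightCondition τ α w) : IsCesaroHyperTransitive T := by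
  refine isCesaroHyperTransitive_of_rightInverse hTS fun f g η hη => ?_
  obtain ⟨f₀, hf₀, Kf, εf, hKf, hf₀K, hεf, hεf1, hτKf⟩ :=
    hA.exists_near_vanishing_off_compact hτ hC f hη
  obtain ⟨g₀, hg₀, Kg, εg, hKg, hg₀K, -, hεg1, hτKg⟩ :=
    hA.exists_near_vanishing_off_compact hτ hC g hη
  obtain ⟨n, hn, hn1, hP, hQ⟩ := hcond (max εf εg) (lt_max_of_lt_left hεf) (max_lt hεf1 hεg1)
    (Kf ∪ Kg) (hKf.union hKg) fun t ht => ht.elim (fun h => (hτKf t h).trans (le_max_left _ _))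
      fun h => (hτKg t h).trans (le_max_right _ _)
  have hW := continuous_weightProd hw_cont α.continuous
  have le_sSup {P : ℝ → ℝ} (hP : Continuous P) {t} (ht : t ∈ Kf ∪ Kg) :
      P t ≤ sSup (P '' (Kf ∪ Kg)) :=
    le_csSup ((hKf.union hKg).bddAbove_image hP.continuousOn) (Set.mem_image_of_mem P ht)
  have sSup_nonneg {P : ℝ → ℝ} (hP : ∀ t, 0 ≤ P t) : 0 ≤ sSup (P '' (Kf ∪ Kg)) :=
    Real.sSup_nonneg (by rintro _ ⟨t, -, rfl⟩; exact hP t)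
  refine ⟨f₀, g₀, hf₀, hg₀, n, hn, hn1, squeeze_zero_norm (fun k => ?_) (by
    simpa using hP.mul_const ‖f₀‖), squeeze_zero_norm (fun k => ?_) (by
    simpa using hQ.mul_const ‖g₀‖)⟩
  · refine hT.norm_inv_smul_pow_le hA hC hτα hw (fun t ht => hf₀K t fun h => ht (.inl h)) _
      (sSup_nonneg fun t => by have := weightProd_pos hw α (n k) (α.symm^[n k] t); positivity)
      fun t ht => le_sSup (continuous_const.mul
        ((hW _).comp (α.symm.continuous.iterate _))) ht
  · refine hT.norm_smul_pow_le hA hC hτα hw hTS (fun t ht => hg₀K t fun h => ht (.inr h)) _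
      (sSup_nonneg fun t => by have := weightProd_pos hw α (n k) t; positivity)
      fun t ht => le_sSup (continuous_const.mul ((hW _).inv₀ fun t =>
        (weightProd_pos hw α _ t).ne')) ht

end IsWeightedComposition

theorem IsWeightedComposition.frequently_weightProd_le {𝓐 : Type*} [NormedAddCommGroup 𝓐]
    [NormedSpace ℂ 𝓐] {τ : ℝ → ℂ} {ι : 𝓐 →ₗ[ℂ] (ℝ → ℂ)} {α : ℝ ≃ₜ ℝ} {w : ℝ → ℝ}
    {T : 𝓐 →L[ℂ] 𝓐} (hT : IsWeightedComposition ι w α T) (hA : IsSegalRealization τ ι)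
    (hw : ∀ t, 0 < w t) (hcht : IsCesaroHyperTransitive T) {φ : 𝓐} {K L : Set ℝ}
    (hφK : ∀ t ∈ K, ι φ t = 1) (hφL : ∀ t ∉ L, ι φ t = 0) (hKL : K ⊆ L) {N : ℕ}
    (hN : ∀ n ≥ N, α^[n] '' L ∩ L = ∅) {δ : ℝ} (hδ : 0 < δ) (hδ1 : δ ≤ 1 / 2) :
    ∃ᶠ ν : ℕ in atTop, ∀ t ∈ K, (ν : ℝ)⁻¹ * weightProd w α ν (α.symm^[ν] t) ≤ 2 * δ ∧
      (ν : ℝ) * (weightProd w α ν t)⁻¹ ≤ 2 * δ := by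
  obtain ⟨n, hn, -, hnf⟩ := hcht _ _ Metric.isOpen_ball Metric.isOpen_ball
    ⟨φ, Metric.mem_ball_self hδ⟩ ⟨φ, Metric.mem_ball_self hδ⟩
  refine frequently_atTop.2 fun a => ?_
  obtain ⟨f, hf, hv⟩ := hnf (max a N)
  set ν := n (max a N)
  have hνN : N ≤ ν := (le_max_right a N).trans (hn.id_le _)
  refine ⟨ν, (le_max_left a N).trans (hn.id_le _), fun t ht => hT.weightProd_le_of_near hw hδ hδ1
    (hA.norm_apply_sub_apply_lt hf) (hA.norm_apply_sub_apply_lt hv) (hφK t ht)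
    (hφL _ fun h => ?_) (hφL _ fun h => ?_)⟩
  · exact (hN ν hνN).subset ⟨⟨t, hKL ht, rfl⟩, h⟩
  · exact (hN ν hνN).subset ⟨⟨_, h, α.iterate_apply_iterate_symm ν t⟩, hKL ht⟩

theorem IsWeightedComposition.cesaroWeightCondition {𝓐 : Type*} [NormedAddCommGroup 𝓐]
    [NormedSpace ℂ 𝓐] {τ : ℝ → ℂ} {ι : 𝓐 →ₗ[ℂ] (ℝ → ℂ)} {α : ℝ ≃ₜ ℝ} {w : ℝ → ℝ}
    {T : 𝓐 →L[ℂ] 𝓐} (hT : IsWeightedComposition ι w α T) (hA : IsSegalRealization τ ι)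
    (hτ : Continuous τ) (haper : IsAperiodic α) (hw : ∀ t, 0 < w t)
    (hcht : IsCesaroHyperTransitive T) : CesaroWeightCondition τ α w := by
  intro ε _ hε1 K hK hτK
  obtain ⟨χ, ε', hε'0, hε'1, hχK, hχc, hχI, hτχ⟩ :=
    exists_cutoff_of_lt_one hτ.norm hK fun t ht => (hτK t ht).trans_lt hε1
  obtain ⟨φ, hφ⟩ := hA.exists_eq_of_hasCompactSupport (g := fun t => (χ t : ℂ))
    (Complex.continuous_ofReal.comp χ.continuous) (hχc.comp_left Complex.ofReal_zero)
    (fun t => by rw [Complex.norm_real, Real.norm_of_nonneg (hχI t).1]; exact (hχI t).2)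
    hε'0.le hε'1 fun t ht => hτχ t (tsupport_comp_subset Complex.ofReal_zero χ ht)
  have hKL : K ⊆ tsupport χ := fun t ht => subset_tsupport χ (by simp [hχK ht])
  obtain ⟨N, -, hN⟩ := haper _ hχc
  refine exists_strictMono_tendsto_zero_of_frequently
    (u := fun ν => sSup ((fun t => (ν : ℝ)⁻¹ * weightProd w α ν (α.symm^[ν] t)) '' K))
    (v := fun ν => sSup ((fun t => (ν : ℝ) * (weightProd w α ν t)⁻¹) '' K))
    (fun ν => ?_) (fun ν => ?_) fun δ hδ => ?_
  · refine Real.sSup_nonneg ?_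
    rintro _ ⟨t, -, rfl⟩
    have := weightProd_pos hw α ν (α.symm^[ν] t)
    positivity
  · refine Real.sSup_nonneg ?_
    rintro _ ⟨t, -, rfl⟩
    have := weightProd_pos hw α ν t
    positivity
  refine (hT.frequently_weightProd_le hA hw hcht (φ := φ) (fun t ht => by simp [hφ, hχK ht])
    (fun t ht => by simp [hφ, image_eq_zero_of_notMem_tsupport ht]) hKL hN
    (δ := min (δ / 2) (1 / 2)) (by positivity) (min_le_right _ _)).mono fun ν hν => ?_
  have h2 : 2 * min (δ / 2) (1 / 2) ≤ δ := by linarith [min_le_left (δ / 2) (1 / 2)]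
  exact ⟨Real.sSup_le (by rintro _ ⟨t, ht, rfl⟩; exact (hν t ht).1.trans h2) hδ.le,
    Real.sSup_le (by rintro _ ⟨t, ht, rfl⟩; exact (hν t ht).2.trans h2) hδ.le⟩

theorem cesaro_hyper_transitive_iff_weight_condition_segal_general
    (τ : ℝ → ℂ) (hτ_cont : Continuous τ) (hτ_bdd : ∃ C, ∀ t, ‖τ t‖ ≤ C)
    {𝓐 : Type*} [NormedAddCommGroup 𝓐] [NormedSpace ℂ 𝓐]
    (ι : 𝓐 →ₗ[ℂ] (ℝ → ℂ))
    (hrange : ∀ g : ℝ → ℂ, (∃ f : 𝓐, ι f = g) ↔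
      (Continuous g ∧ Tendsto g (cocompact ℝ) (nhds 0) ∧
        Summable (fun k : ℕ => ⨆ t : ℝ, ‖g t * (τ t) ^ k‖)))
    (hnorm : ∀ f : 𝓐, ‖f‖ = ∑' k : ℕ, ⨆ t : ℝ, ‖ι f t * (τ t) ^ k‖)
    (α : ℝ ≃ₜ ℝ)
    (haper : ∀ K : Set ℝ, IsCompact K →
      ∃ N : ℕ, 0 < N ∧ ∀ n ≥ N, ((⇑α)^[n] '' K) ∩ K = ∅)
    (hτα : ∀ t, τ (α t) = τ t)
    (w : ℝ → ℝ) (hw_cont : Continuous w) (hw_pos : ∀ t, 0 < w t)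
    (T S : 𝓐 →L[ℂ] 𝓐)
    (hT : ∀ (f : 𝓐) (t : ℝ), ι (T f) t = (w t : ℂ) * ι f (α t))
    (hTS : ∀ f, T (S f) = f) :
    IsCesaroHyperTransitive T ↔
      ∀ ε : ℝ, 0 < ε → ε < 1 → ∀ K : Set ℝ, IsCompact K →
        (∀ t ∈ K, ‖τ t‖ ≤ ε) →
        ∃ n : ℕ → ℕ, StrictMono n ∧ (∀ k, 1 ≤ n k) ∧
          Tendsto (fun k =>
              sSup ((fun t => ((n k : ℝ))⁻¹ *
                ∏ j ∈ range (n k), w ((⇑α.symm)^[n k - j] t)) '' K))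
            atTop (nhds 0) ∧
          Tendsto (fun k =>
              sSup ((fun t => (n k : ℝ) *
                ∏ j ∈ range (n k), (w ((⇑α)^[j] t))⁻¹) '' K))
            atTop (nhds 0) := by
  obtain ⟨C, hC⟩ := hτ_bdd
  have hA : IsSegalRealization τ ι := ⟨hrange, hnorm⟩
  have hTw : IsWeightedComposition ι w α T := hT
  have hTS' : T * S = 1 := ContinuousLinearMap.ext hTS
  simp only [prod_range_symm_iterate_sub, prod_inv_distrib]
  exact ⟨hTw.cesaroWeightCondition hA hτ_cont haper hw_pos,
    hTw.isCesaroHyperTransitive hA hC hτα hw_pos hτ_cont hw_cont hTS'⟩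

/-- Characterization of topologically Cesàro hyper-transitive weighted composition
operators on the Segal algebra `A_τ = { f ∈ C₀(ℝ) : Σ_k ‖f·τ^k‖_∞ < ∞ }` with the norm
`‖f‖_τ = Σ_k ‖f·τ^k‖_∞`.  The Banach space `𝓐` together with the injective linear map
`ι` realizes `A_τ` as a space of functions on `ℝ`. -/
theorem cesaro_hyper_transitive_iff_weight_condition_segal
    (τ : ℝ → ℂ) (hτ_cont : Continuous τ) (hτ_bdd : ∃ C, ∀ t, ‖τ t‖ ≤ C)
    {𝓐 : Type*} [NormedAddCommGroup 𝓐] [NormedSpace ℂ 𝓐] [CompleteSpace 𝓐]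
    (ι : 𝓐 →ₗ[ℂ] (ℝ → ℂ)) (hι_inj : Function.Injective ι)
    (hrange : ∀ g : ℝ → ℂ, (∃ f : 𝓐, ι f = g) ↔
      (Continuous g ∧ Tendsto g (cocompact ℝ) (nhds 0) ∧
        Summable (fun k : ℕ => ⨆ t : ℝ, ‖g t * (τ t) ^ k‖)))
    (hnorm : ∀ f : 𝓐, ‖f‖ = ∑' k : ℕ, ⨆ t : ℝ, ‖ι f t * (τ t) ^ k‖)
    (α : ℝ ≃ₜ ℝ)
    (haper : ∀ K : Set ℝ, IsCompact K →
      ∃ N : ℕ, 0 < N ∧ ∀ n ≥ N, ((⇑α)^[n] '' K) ∩ K = ∅)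
    (hτα : ∀ t, τ (α t) = τ t)
    (w : ℝ → ℝ) (hw_cont : Continuous w) (hw_pos : ∀ t, 0 < w t)
    (hw_bdd : ∃ C, ∀ t, w t ≤ C) (hw_inv_bdd : ∃ C, ∀ t, (w t)⁻¹ ≤ C)
    (T S : 𝓐 →L[ℂ] 𝓐)
    (hT : ∀ (f : 𝓐) (t : ℝ), ι (T f) t = (w t : ℂ) * ι f (α t))
    (hST : ∀ f, S (T f) = f) (hTS : ∀ f, T (S f) = f) :
    IsCesaroHyperTransitive T ↔
      ∀ ε : ℝ, 0 < ε → ε < 1 → ∀ K : Set ℝ, IsCompact K →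
        (∀ t ∈ K, ‖τ t‖ ≤ ε) →
        ∃ n : ℕ → ℕ, StrictMono n ∧ (∀ k, 1 ≤ n k) ∧
          Tendsto (fun k =>
              sSup ((fun t => ((n k : ℝ))⁻¹ *
                ∏ j ∈ range (n k), w ((⇑α.symm)^[n k - j] t)) '' K))
            atTop (nhds 0) ∧
          Tendsto (fun k =>
              sSup ((fun t => (n k : ℝ) *
                ∏ j ∈ range (n k), (w ((⇑α)^[j] t))⁻¹) '' K))
            atTop (nhds 0) :=
  cesaro_hyper_transitive_iff_weight_condition_segal_general τ hτ_cont hτ_bdd ι hrange hnorm α haper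
    hτα w hw_cont hw_pos T S hT hTS
end
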